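/- arXiv:1911.03198 — 4 statements merged into one kernel-verified Lean document; each statement's English description precedes it below -/
import Mathlib

section
/- Let G and H be nontrivial finite groups. The free product G * H is virtually infinite cyclic if and only if G and H both have order 2. -/
/-- A group is virtually infinite cyclic if it has a finite index subgroup isomorphic to ℤ. -/
def IsVirtuallyInfiniteCyclic (H : Type*) [Group H] : Prop :=
  ∃ L : Subgroup H, L.FiniteIndex ∧ Nonempty (L ≃* Multiplicative ℤ)

/-!
If `G = {1, s}` and `H = {1, t}`, then `G ∗ H` is the infinite dihedral group: `st` has infinite
order, and since conjugation by `s` inverts `st`, every element lies in `⟨st⟩` or in `s⟨st⟩`.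

Conversely, a finite-index subgroup `L ≅ ℤ` is abelian and contains a positive power of every
element. If `G` has distinct nontrivial elements `g₁, g₂` and `1 ≠ h ∈ H`, the powers of `g₁h` and
`g₂h` lying in `L` would commute, but the reduced words of their two products begin with `g₁` and
`g₂` respectively.
-/

namespace Subgroup

variable {Γ : Type*} [Group Γ]

theorem nonempty_zpowers_mulEquiv_int {z : Γ} (hz : ¬IsOfFinOrder z) :
    Nonempty (zpowers z ≃* Multiplicative ℤ) :=
  have : Infinite (zpowers z) := (infinite_zpowers.mpr hz).to_subtype
  ⟨intCyclicMulEquiv.symm⟩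

theorem finiteIndex_of_forall_mem_or_mul_mem {K : Subgroup Γ} (s : Γ)
    (h : ∀ x, x ∈ K ∨ s * x ∈ K) : K.FiniteIndex := by
  refine finiteIndex_of_leftCoset_cover_const (s := Finset.univ)
    (g := fun b : Bool => cond b s⁻¹ 1) (Set.eq_univ_of_forall fun x => ?_)
  simp only [Finset.mem_univ, Set.iUnion_true, Set.mem_iUnion, Bool.exists_bool, cond_false,
    cond_true, mem_leftCoset_iff, inv_inv, inv_one, one_mul]
  exact (h x).imp id id

theorem mul_mul_mem_zpowers_mul {s t k : Γ} (hs : s * s = 1) (ht : t * t = 1)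
    (hk : k ∈ zpowers (s * t)) : s * k * s ∈ zpowers (s * t) := by
  obtain ⟨n, rfl⟩ := mem_zpowers_iff.mp hk
  have hs' : s⁻¹ = s := inv_eq_of_mul_eq_one_right hs
  have hconj : s * (s * t) * s⁻¹ = (s * t)⁻¹ := by
    rw [mul_inv_rev, hs', inv_eq_of_mul_eq_one_right ht, ← mul_assoc, hs, one_mul]
  have hpow : s * (s * t) ^ n * s = (s * t)⁻¹ ^ n := by
    rw [← hconj, conj_zpow, hs']
  exact hpow ▸ zpow_mem (inv_mem (mem_zpowers _)) n

theorem mul_mem_or_mul_mul_mem_zpowers_mul {s t x y : Γ} (hs : s * s = 1) (ht : t * t = 1)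
    (hx : x ∈ zpowers (s * t) ∨ s * x ∈ zpowers (s * t))
    (hy : y ∈ zpowers (s * t) ∨ s * y ∈ zpowers (s * t)) :
    x * y ∈ zpowers (s * t) ∨ s * (x * y) ∈ zpowers (s * t) := by
  have hconj {k} := mul_mul_mem_zpowers_mul (k := k) hs ht
  rcases hx with hx | hx <;> rcases hy with hy | hy
  · exact .inl (mul_mem hx hy)
  · right
    convert mul_mem (hconj hx) hy using 1
    simp [mul_assoc, ← mul_assoc s s, hs]
  · exact .inr (mul_assoc s x y ▸ mul_mem hx hy)
  · left
    convert mul_mem (hconj hx) hy using 1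
    simp [mul_assoc, ← mul_assoc s s, hs]

end Subgroup

section CardTwo

variable {A : Type*} [Group A]

theorem exists_ne_one_forall_eq_of_card_eq_two (h : Nat.card A = 2) :
    ∃ a : A, a ≠ 1 ∧ ∀ x : A, x = 1 ∨ x = a := by
  obtain ⟨a, ha, huniq⟩ := (Nat.card_eq_two_iff' (1 : A)).mp h
  exact ⟨a, ha, fun x => (eq_or_ne x 1).imp_right (huniq x)⟩

theorem mul_self_eq_one_of_card_eq_two (h : Nat.card A = 2) (x : A) : x * x = 1 := by
  rw [← sq, ← h, pow_card_eq_one']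

theorem exists_ne_one_ne_of_card_ne_two [Nontrivial A] (h : Nat.card A ≠ 2) :
    ∃ g₁ g₂ : A, g₁ ≠ 1 ∧ g₂ ≠ 1 ∧ g₁ ≠ g₂ := by
  obtain ⟨g₁, hg₁⟩ := exists_ne (1 : A)
  by_contra! hall
  exact h ((Nat.card_eq_two_iff' 1).mpr
    ⟨g₁, hg₁, fun g₂ hg₂ => (hall g₁ g₂ hg₁ hg₂).symm⟩)

end CardTwo

namespace Monoid.CoprodI.NeWord

variable {ι : Type*} {M : ι → Type*} [∀ i, Monoid (M i)] {i j : ι}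

theorem head_eq_of_prod_eq {w₁ w₂ : NeWord M i j} (h : w₁.prod = w₂.prod) :
    w₁.head = w₂.head := by
  classical
  have hword : w₁.toWord = w₂.toWord := Word.equiv.symm.injective h
  have hhead := congrArg (fun w : Word M => w.toList.head?) hword
  simp only [toWord, toList_head?, Option.some.injEq] at hhead
  exact sigma_mk_injective hhead

theorem prod_ne_one (w : NeWord M i j) : w.prod ≠ 1 := by
  classical
  intro h
  have hword : w.toWord = Word.empty := Word.equiv.symm.injective (h.trans Word.prod_empty.symm)
  exact w.toList_ne_nil (congrArg Word.toList hword)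

end Monoid.CoprodI.NeWord

namespace Monoid.CoprodI

variable {ι : Type*} {M : ι → Type*} [∀ i, Monoid (M i)] {i j : ι}

theorem exists_neWord_prod_eq_pow (hij : i ≠ j) {g : M i} {h : M j} (hg : g ≠ 1) (hh : h ≠ 1)
    (n : ℕ) : ∃ w : NeWord M i j, w.head = g ∧ w.prod = (of g * of h) ^ (n + 1) := by
  induction n with
  | zero =>
    exact ⟨.append (.singleton g hg) hij (.singleton h hh), rfl, by simp [NeWord.append_prod]⟩
  | succ n ih =>
    obtain ⟨w, hhead, hprod⟩ := ih
    refine ⟨.append w hij.symm (.append (.singleton g hg) hij (.singleton h hh)), hhead, ?_⟩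
    simp [NeWord.append_prod, hprod, pow_succ]

theorem not_commute_pow_succ (hij : i ≠ j) {g₁ g₂ : M i} {h : M j} (hg₁ : g₁ ≠ 1)
    (hg₂ : g₂ ≠ 1) (hh : h ≠ 1) (hne : g₁ ≠ g₂) (m n : ℕ) :
    ¬Commute ((of g₁ * of h) ^ (m + 1)) ((of g₂ * of h) ^ (n + 1)) := by
  intro hcomm
  obtain ⟨w₁, hhead₁, hprod₁⟩ := exists_neWord_prod_eq_pow hij hg₁ hh m
  obtain ⟨w₂, hhead₂, hprod₂⟩ := exists_neWord_prod_eq_pow hij hg₂ hh n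
  have hprod : (w₁.append hij.symm w₂).prod = (w₂.append hij.symm w₁).prod := by
    simpa only [NeWord.append_prod, hprod₁, hprod₂] using hcomm.eq
  simpa [hhead₁, hhead₂, hne] using NeWord.head_eq_of_prod_eq hprod

theorem pow_succ_ne_one (hij : i ≠ j) {g : M i} {h : M j} (hg : g ≠ 1) (hh : h ≠ 1) (n : ℕ) :
    (of g * of h) ^ (n + 1) ≠ 1 := by
  obtain ⟨w, -, hprod⟩ := exists_neWord_prod_eq_pow hij hg hh n
  exact hprod ▸ w.prod_ne_one

end Monoid.CoprodI

universe u v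

namespace Monoid.Coprod

/-- Reduced words are available for `Monoid.CoprodI`, whose factors must live in one universe;
`A ∗ B` maps into the indexed free product of the lifted factors. -/
def ulifts (A : Type u) (B : Type v) : Bool → Type (max u v)
  | true => ULift.{v} A
  | false => ULift.{u} B

variable {A : Type u} {B : Type v} [Group A] [Group B]

instance : ∀ b, Group (ulifts A B b)
  | true => ULift.group
  | false => ULift.group

def toCoprodI : A ∗ B →* CoprodI (ulifts A B) :=
  lift ((CoprodI.of (i := true)).comp MulEquiv.ulift.symm.toMonoidHom)
    ((CoprodI.of (i := false)).comp MulEquiv.ulift.symm.toMonoidHom)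

@[simp]
theorem toCoprodI_inl (a : A) :
    toCoprodI (inl a : A ∗ B) = CoprodI.of (i := true) (ULift.up a) :=
  rfl

@[simp]
theorem toCoprodI_inr (b : B) :
    toCoprodI (inr b : A ∗ B) = CoprodI.of (i := false) (ULift.up b) :=
  rfl

theorem not_commute_pow {g₁ g₂ : A} {b : B} (hg₁ : g₁ ≠ 1) (hg₂ : g₂ ≠ 1) (hb : b ≠ 1)
    (hne : g₁ ≠ g₂) {m n : ℕ} (hm : m ≠ 0) (hn : n ≠ 0) :
    ¬Commute ((inl g₁ * inr b : A ∗ B) ^ m) ((inl g₂ * inr b) ^ n) := by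
  obtain ⟨m, rfl⟩ := Nat.exists_eq_succ_of_ne_zero hm
  obtain ⟨n, rfl⟩ := Nat.exists_eq_succ_of_ne_zero hn
  intro hcomm
  refine CoprodI.not_commute_pow_succ (M := ulifts A B) (i := true) (j := false) (by decide)
    (ULift.up_injective.ne hg₁) (ULift.up_injective.ne hg₂) (ULift.up_injective.ne hb)
    (ULift.up_injective.ne hne) m n ?_
  simpa using hcomm.map toCoprodI

theorem orderOf_inl_mul_inr {a : A} {b : B} (ha : a ≠ 1) (hb : b ≠ 1) :
    orderOf (inl a * inr b : A ∗ B) = 0 := by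
  refine orderOf_eq_zero_iff'.mpr fun n hn hpow => ?_
  obtain ⟨n, rfl⟩ := Nat.exists_eq_succ_of_ne_zero hn.ne'
  refine CoprodI.pow_succ_ne_one (M := ulifts A B) (i := true) (j := false) (by decide)
    (ULift.up_injective.ne ha) (ULift.up_injective.ne hb) n ?_
  simpa using congrArg toCoprodI hpow

theorem card_eq_two_left [Nontrivial A] [Nontrivial B] (L : Subgroup (A ∗ B)) [L.FiniteIndex]
    [IsMulCommutative L] : Nat.card A = 2 := by
  by_contra hA
  obtain ⟨g₁, g₂, hg₁, hg₂, hne⟩ := exists_ne_one_ne_of_card_ne_two hA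
  obtain ⟨b, hb⟩ := exists_ne (1 : B)
  obtain ⟨m, hm, -, hmL⟩ :=
    Subgroup.exists_pow_mem_of_index_ne_zero L.index_ne_zero_of_finite (inl g₁ * inr b)
  obtain ⟨n, hn, -, hnL⟩ :=
    Subgroup.exists_pow_mem_of_index_ne_zero L.index_ne_zero_of_finite (inl g₂ * inr b)
  exact not_commute_pow hg₁ hg₂ hb hne hm.ne' hn.ne' (setLike_mul_comm hmL hnL)

theorem card_eq_two_right [Nontrivial A] [Nontrivial B] (L : Subgroup (A ∗ B)) [L.FiniteIndex]
    [IsMulCommutative L] : Nat.card B = 2 :=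
  have : (L.map (MulEquiv.coprodComm A B : A ∗ B →* B ∗ A)).FiniteIndex :=
    ⟨by rw [Subgroup.index_map_equiv]; exact L.index_ne_zero_of_finite⟩
  card_eq_two_left (L.map (MulEquiv.coprodComm A B : A ∗ B →* B ∗ A))

theorem isVirtuallyInfiniteCyclic_of_card_eq_two (hA : Nat.card A = 2) (hB : Nat.card B = 2) :
    IsVirtuallyInfiniteCyclic (A ∗ B) := by
  obtain ⟨a, ha, hA'⟩ := exists_ne_one_forall_eq_of_card_eq_two hA
  obtain ⟨b, hb, hB'⟩ := exists_ne_one_forall_eq_of_card_eq_two hB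
  have hs : (inl a : A ∗ B) * inl a = 1 := by
    rw [← map_mul, mul_self_eq_one_of_card_eq_two hA, map_one]
  have ht : (inr b : A ∗ B) * inr b = 1 := by
    rw [← map_mul, mul_self_eq_one_of_card_eq_two hB, map_one]
  refine ⟨_, Subgroup.finiteIndex_of_forall_mem_or_mul_mem (inl a) fun x => ?_,
    Subgroup.nonempty_zpowers_mulEquiv_int
      (orderOf_eq_zero_iff.mp (orderOf_inl_mul_inr ha hb))⟩
  induction x using induction_on with
  | inl x => rcases hA' x with rfl | rfl <;> simp [hs]
  | inr y => rcases hB' y with rfl | rfl <;> simp [Subgroup.mem_zpowers]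
  | mul x y hx hy => exact Subgroup.mul_mem_or_mul_mul_mem_zpowers_mul hs ht hx hy

end Monoid.Coprod

theorem coprod_virtually_infinite_cyclic_iff_general (G H : Type*) [Group G] [Group H]
    [Nontrivial G] [Nontrivial H] :
    IsVirtuallyInfiniteCyclic (Monoid.Coprod G H) ↔ Nat.card G = 2 ∧ Nat.card H = 2 := by
  refine ⟨fun ⟨L, _, ⟨e⟩⟩ => ?_, fun ⟨hG, hH⟩ =>
    Monoid.Coprod.isVirtuallyInfiniteCyclic_of_card_eq_two hG hH⟩
  have : IsMulCommutative L :=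
    .of_comm fun x y => e.injective (by rw [map_mul, map_mul, mul_comm])
  exact ⟨Monoid.Coprod.card_eq_two_left L, Monoid.Coprod.card_eq_two_right L⟩

/-- For nontrivial finite groups G and H, the free product G * H is virtually infinite
cyclic iff both G and H have order 2. -/
theorem coprod_virtually_infinite_cyclic_iff (G H : Type*) [Group G] [Group H]
    [Finite G] [Finite H] [Nontrivial G] [Nontrivial H] :
    IsVirtuallyInfiniteCyclic (Monoid.Coprod G H) ↔ Nat.card G = 2 ∧ Nat.card H = 2 :=
  coprod_virtually_infinite_cyclic_iff_general G H
end

section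
/- Let G and H be groups. The kernel of the canonical surjection π : G * H → G × H (restricting to the identity embedding on each factor) is a free group. -/
/-!
Modulo the subgroup `S` generated by the commutators `⁅inl g, inr h⁆`, the images of `G` and `H`
commute; `S` is normal, since conjugating such a commutator by `inl g'` or `inr h'` gives a product
of two of them, so `G ∗ H ⧸ S` is a quotient of `G × H` and `S` is the kernel. The commutators with
`g ≠ 1 ≠ h` generate `S` freely: send `inl g` and `inr h` to the translations by `(g, 1)` and
`(1, h)` in `(G × H → F) ⋊ (G × H)`, where `F` is the free group on these pairs, the former
conjugated by the function placing the generator `(g, h)` at `(g, h)⁻¹`. The commutator of `(g, h)`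
then goes to a function whose value at `1` is that generator, which inverts `F → G ∗ H` on the left.
-/

open scoped commutatorElement

-- `mulAutArrow_apply_apply` stops at `(g • F) a`, which `simp` cannot unfold: the action on
-- functions is only a local instance.
theorem mulAutArrow_apply_apply_eq_inv_smul {G A M : Type*} [Group G] [MulAction G A] [Monoid M]
    (g : G) (F : A → M) (a : A) : mulAutArrow g F a = F (g⁻¹ • a) :=
  rfl

namespace Monoid.Coprod

variable {G H : Type*} [Group G] [Group H]

theorem toProd_commutator_inl_inr (g : G) (h : H) :
    (toProd ⁅(inl g : G ∗ H), (inr h : G ∗ H)⁆ : G × H) = 1 := by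
  simp [commutatorElement_def]

theorem closure_range_commutator_inl_inr_normal :
    (Subgroup.closure
      (Set.range fun p : G × H => ⁅(inl p.1 : G ∗ H), (inr p.2 : G ∗ H)⁆)).Normal := by
  set S := Subgroup.closure (Set.range fun p : G × H => ⁅(inl p.1 : G ∗ H), (inr p.2 : G ∗ H)⁆)
  have mem (g : G) (h : H) : ⁅(inl g : G ∗ H), (inr h : G ∗ H)⁆ ∈ S :=
    Subgroup.subset_closure ⟨(g, h), rfl⟩
  rw [← Subgroup.normalizer_eq_top_iff, eq_top_iff, ← range_inl_sup_range_inr, sup_le_iff,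
    Subgroup.le_normalizer_closure_iff, Subgroup.le_normalizer_closure_iff]
  constructor
  · rintro _ ⟨g', rfl⟩ _ ⟨⟨g, h⟩, rfl⟩
    have conj_eq : (inl g' : G ∗ H) * ⁅(inl g : G ∗ H), inr h⁆ * (inl g')⁻¹ =
        ⁅(inl (g' * g) : G ∗ H), inr h⁆ * ⁅(inl g' : G ∗ H), inr h⁆⁻¹ := by
      simp only [commutatorElement_def, map_mul]
      group
    rw [conj_eq]
    exact mul_mem (mem _ _) (inv_mem (mem _ _))
  · rintro _ ⟨h', rfl⟩ _ ⟨⟨g, h⟩, rfl⟩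
    have conj_eq : (inr h' : G ∗ H) * ⁅(inl g : G ∗ H), inr h⁆ * (inr h')⁻¹ =
        ⁅(inl g : G ∗ H), inr h'⁆⁻¹ * ⁅(inl g : G ∗ H), inr (h' * h)⁆ := by
      simp only [commutatorElement_def, map_mul]
      group
    rw [conj_eq]
    exact mul_mem (inv_mem (mem _ _)) (mem _ _)

theorem ker_toProd_eq_closure_range_commutator_inl_inr :
    (toProd : G ∗ H →* G × H).ker =
      Subgroup.closure (Set.range fun p : G × H => ⁅(inl p.1 : G ∗ H), (inr p.2 : G ∗ H)⁆) := by
  set S := Subgroup.closure (Set.range fun p : G × H => ⁅(inl p.1 : G ∗ H), (inr p.2 : G ∗ H)⁆)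
  have : S.Normal := closure_range_commutator_inl_inr_normal
  refine le_antisymm ?_ (Subgroup.closure_le _ |>.2 ?_)
  · let q := QuotientGroup.mk' S
    have comm (g : G) (h : H) : Commute (q (inl g)) (q (inr h)) := by
      rw [← commutatorElement_eq_one_iff_commute, ← map_commutatorElement, QuotientGroup.mk'_apply,
        QuotientGroup.eq_one_iff]
      exact Subgroup.subset_closure ⟨(g, h), rfl⟩
    have q_factors : q = ((q.comp inl).noncommCoprod (q.comp inr) comm).comp toProd := by
      ext <;> simp
    intro w hw
    have : q w = 1 := by rw [q_factors, MonoidHom.comp_apply, hw, map_one]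
    exact (QuotientGroup.eq_one_iff w).1 this
  · rintro _ ⟨p, rfl⟩
    exact toProd_commutator_inl_inr p.1 p.2

variable (G H) in
abbrev NontrivialPairs := {p : G × H // p.1 ≠ 1 ∧ p.2 ≠ 1}

def freeCommutatorHom : FreeGroup (NontrivialPairs G H) →* G ∗ H :=
  FreeGroup.lift fun i => ⁅(inl i.1.1 : G ∗ H), inr i.1.2⁆

theorem range_freeCommutatorHom : (freeCommutatorHom : _ →* G ∗ H).range = toProd.ker := by
  rw [ker_toProd_eq_closure_range_commutator_inl_inr, freeCommutatorHom,
    FreeGroup.range_lift_eq_closure]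
  refine le_antisymm (Subgroup.closure_mono ?_) (Subgroup.closure_le _ |>.2 ?_)
  · rintro _ ⟨i, rfl⟩
    exact ⟨i.1, rfl⟩
  · rintro _ ⟨⟨g, h⟩, rfl⟩
    obtain rfl | hg := eq_or_ne g 1
    · simp [commutatorElement_def]
    obtain rfl | hh := eq_or_ne h 1
    · simp [commutatorElement_def]
    exact Subgroup.subset_closure ⟨⟨(g, h), hg, hh⟩, rfl⟩

open scoped Classical in
noncomputable def freeGenerator (p : G × H) : FreeGroup (NontrivialPairs G H) :=
  if hp : p.1 ≠ 1 ∧ p.2 ≠ 1 then .of ⟨p, hp⟩ else 1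

variable (G H) in
abbrev Wreath := (G × H → FreeGroup (NontrivialPairs G H)) ⋊[mulAutArrow] (G × H)

noncomputable def toWreath : G ∗ H →* Wreath G H :=
  lift ((MulAut.conj (SemidirectProduct.inl fun p => freeGenerator p⁻¹)).toMonoidHom.comp
      (SemidirectProduct.inr.comp (MonoidHom.inl G H)))
    (SemidirectProduct.inr.comp (MonoidHom.inr G H))

theorem toWreath_commutator_right (i : NontrivialPairs G H) :
    (toWreath ⁅(inl i.1.1 : G ∗ H), inr i.1.2⁆).right = (1 : G × H) := by
  simp [toWreath, commutatorElement_def, Prod.ext_iff]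

theorem toWreath_commutator_left_one (i : NontrivialPairs G H) :
    (toWreath ⁅(inl i.1.1 : G ∗ H), inr i.1.2⁆).left 1 = .of i := by
  simpa [toWreath, commutatorElement_def, freeGenerator, -mulAutArrow_apply_apply,
    mulAutArrow_apply_apply_eq_inv_smul] using i.2

noncomputable def wreathLeft :
    FreeGroup (NontrivialPairs G H) →* (G × H → FreeGroup (NontrivialPairs G H)) :=
  FreeGroup.lift fun i => (toWreath ⁅(inl i.1.1 : G ∗ H), inr i.1.2⁆).left

theorem inl_wreathLeft (u : FreeGroup (NontrivialPairs G H)) :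
    SemidirectProduct.inl (wreathLeft u) = toWreath (freeCommutatorHom u) := by
  suffices SemidirectProduct.inl.comp wreathLeft = toWreath.comp freeCommutatorHom from
    DFunLike.congr_fun this u
  ext1 i
  simp only [MonoidHom.comp_apply, wreathLeft, freeCommutatorHom, FreeGroup.lift_apply_of]
  conv_rhs => rw [← SemidirectProduct.inl_left_mul_inr_right (toWreath _),
    toWreath_commutator_right, map_one, mul_one]

theorem wreathLeft_apply_one (u : FreeGroup (NontrivialPairs G H)) : wreathLeft u 1 = u := by
  suffices (Pi.evalMonoidHom _ 1).comp wreathLeft = MonoidHom.id (FreeGroup (NontrivialPairs G H))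
    from DFunLike.congr_fun this u
  ext1 i
  simpa [wreathLeft] using toWreath_commutator_left_one i

theorem freeCommutatorHom_injective :
    Function.Injective (freeCommutatorHom : _ →* G ∗ H) := by
  intro u v huv
  have hleft : wreathLeft u = wreathLeft v :=
    SemidirectProduct.inl_injective (φ := mulAutArrow) <| by
      rw [inl_wreathLeft, inl_wreathLeft, huv]
  rw [← wreathLeft_apply_one u, ← wreathLeft_apply_one v, hleft]

end Monoid.Coprod

/-- The kernel of the canonical map from the free product G * H onto the direct product
G × H is a free group. -/
theorem ker_coprod_to_prod_isFreeGroup (G H : Type*) [Group G] [Group H] :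
    IsFreeGroup
      ↥(MonoidHom.ker (Monoid.Coprod.lift (MonoidHom.inl G H) (MonoidHom.inr G H))) :=
  IsFreeGroup.ofMulEquiv ((MonoidHom.ofInjective Monoid.Coprod.freeCommutatorHom_injective).trans
    (MulEquiv.subgroupCongr Monoid.Coprod.range_freeCommutatorHom))
end

section
/- Let G and H be finite groups with |G| ≥ 3 and |H| ≥ 2. Then the kernel of the canonical map π : G * H → G × H is a free group of rank at least 2; in particular the kernel is a nonabelian free group. -/
open Monoid CoprodI CoprodI.Word Function

namespace KCP

section WordLemmas

variable {ι : Type*} [DecidableEq ι] {M : ι → Type*} [∀ i, Group (M i)] [∀ i, DecidableEq (M i)]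

lemma smul_toList_A {i : ι} (m : M i) (hm : m ≠ 1) (w : Word M) (hw : w.fstIdx ≠ some i) :
    (CoprodI.of m • w).toList = ⟨i, m⟩ :: w.toList := by
  rw [of_smul_def, equivPair_eq_of_fstIdx_ne hw]
  simp [rcons, hm]

lemma smul_toList_B {i : ι} (m : M i) (w : Word M) {m' : M i} {t : List (Σ i, M i)}
    (hw : w.toList = ⟨i, m'⟩ :: t) :
    (CoprodI.of m • w).toList = if m * m' = 1 then t else ⟨i, m * m'⟩ :: t := by
  set p := equivPair i w with hp
  have hrw : rcons p = w := (equivPair i).symm_apply_apply w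
  have hfst : w.fstIdx = some i := by rw [fstIdx, hw]; rfl
  have hph : p.head ≠ 1 := by
    intro h1
    have ht : p.tail = w := by rw [← hrw, rcons, dif_pos h1]
    exact p.fstIdx_ne (ht ▸ hfst)
  have hcons : (⟨i, p.head⟩ : Σ i, M i) :: p.tail.toList = ⟨i, m'⟩ :: t := by
    rw [← hw, ← hrw, rcons, dif_neg hph]; rfl
  have hhead : p.head = m' := by
    have := List.head_eq_of_cons_eq hcons
    simpa using this
  have htail : p.tail.toList = t := List.tail_eq_of_cons_eq hcons
  rw [of_smul_def, ← hp, rcons]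
  subst hhead
  split_ifs with h
  · simpa using htail
  · simp [cons, htail]

/-- If `v` does not start with `⟨i, m⁻¹⟩`, then `of m • v` starts with index `i`. -/
lemma smul_fstIdx_D {i : ι} (m : M i) (hm : m ≠ 1) (v : Word M)
    (hv : ∀ t, v.toList ≠ ⟨i, m⁻¹⟩ :: t) : (CoprodI.of m • v).fstIdx = some i := by
  rcases hL : v.toList with _ | ⟨⟨k, y⟩, t⟩
  · rw [fstIdx, smul_toList_A m hm v (by rw [fstIdx, hL]; simp)]; rfl
  · by_cases hk : k = i
    · subst hk
      have hy : m * y ≠ 1 := by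
        intro h
        exact hv t (by rw [hL, inv_eq_of_mul_eq_one_right h])
      rw [fstIdx, smul_toList_B m v hL, if_neg hy]; rfl
    · rw [fstIdx, smul_toList_A m hm v (by rw [fstIdx, hL]; simpa using hk)]; rfl


lemma smul_toList_E {i j : ι} (hij : i ≠ j) {a : M i} {b : M j} (hb : b ≠ 1) (w : Word M)
    (hw : ∀ t, w.toList ≠ ⟨j, b⟩ :: ⟨i, a⟩ :: t) :
    ∀ t, (CoprodI.of b⁻¹ • w).toList ≠ ⟨i, a⟩ :: t := by
  intro t ht
  rcases hL : w.toList with _ | ⟨⟨k, y⟩, t0⟩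
  · rw [smul_toList_A b⁻¹ (inv_ne_one.2 hb) w (by rw [fstIdx, hL]; simp)] at ht
    simp only [List.cons.injEq] at ht
    exact hij (congrArg Sigma.fst ht.1).symm
  · by_cases hk : k = j
    · subst hk
      by_cases hy : b⁻¹ * y = 1
      · rw [smul_toList_B b⁻¹ w hL, if_pos hy] at ht
        have hyb : y = b := (inv_mul_eq_one.mp hy).symm
        exact hw t (by rw [hL, hyb, ht])
      · rw [smul_toList_B b⁻¹ w hL, if_neg hy] at ht
        simp only [List.cons.injEq] at ht
        exact hij (congrArg Sigma.fst ht.1).symm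
    · rw [smul_toList_A b⁻¹ (inv_ne_one.2 hb) w (by rw [fstIdx, hL]; simpa using hk)] at ht
      simp only [List.cons.injEq] at ht
      exact hij (congrArg Sigma.fst ht.1).symm

lemma smul_toList_C {i j : ι} (hij : i ≠ j) {a : M i} {b : M j} (ha : a ≠ 1) (hb : b ≠ 1)
    (w : Word M) (hw : ∀ t, w.toList ≠ ⟨j, b⟩ :: ⟨i, a⟩ :: t) :
    ((CoprodI.of a * CoprodI.of b * CoprodI.of a⁻¹ * CoprodI.of b⁻¹) • w).toList.take 2 =
      [⟨i, a⟩, ⟨j, b⟩] := by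
  have key : (CoprodI.of a * CoprodI.of b * CoprodI.of a⁻¹ * CoprodI.of b⁻¹) • w =
      CoprodI.of a • CoprodI.of b • CoprodI.of a⁻¹ • CoprodI.of b⁻¹ • w := by
    rw [mul_smul, mul_smul, mul_smul]
  rw [key]
  set w1 := CoprodI.of b⁻¹ • w with hw1
  have h2 : (CoprodI.of a⁻¹ • w1).fstIdx = some i := by
    refine smul_fstIdx_D a⁻¹ (inv_ne_one.2 ha) w1 ?_
    rw [inv_inv]
    exact smul_toList_E hij hb w hw
  set w2 := CoprodI.of a⁻¹ • w1 with hw2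
  have h3 : (CoprodI.of b • w2).toList = ⟨j, b⟩ :: w2.toList :=
    smul_toList_A b hb w2 (by rw [h2]; simpa using hij)
  have h4 : (CoprodI.of a • CoprodI.of b • w2).toList
      = ⟨i, a⟩ :: ⟨j, b⟩ :: w2.toList := by
    rw [smul_toList_A a ha _ (by rw [fstIdx, h3]; simpa using Ne.symm hij), h3]
  rw [h4]
  rfl
end WordLemmas


variable {G H : Type} [Group G] [Group H]

lemma sigma_snd_eq {ι : Type*} {M : ι → Type*} {i : ι} {x y : M i}
    (h : (⟨i, x⟩ : Σ j, M j) = ⟨i, y⟩) : x = y :=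
  eq_of_heq (Sigma.mk.inj_iff.mp h).2

def S (G H : Type) [Group G] [Group H] : Type := {p : G × H // p.1 ≠ 1 ∧ p.2 ≠ 1}

abbrev Mfam (G H : Type) : Bool → Type := fun b => cond b G H

instance : ∀ b : Bool, Group (Mfam G H b) := fun b => b.casesOn ‹Group H› ‹Group G›

instance [DecidableEq G] [DecidableEq H] : ∀ b : Bool, DecidableEq (Mfam G H b) :=
  fun b => b.casesOn ‹DecidableEq H› ‹DecidableEq G›

def agen (s : S G H) : CoprodI (Mfam G H) :=
  CoprodI.of (M := Mfam G H) (i := true) s.1.1 * CoprodI.of (M := Mfam G H) (i := false) s.1.2 *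
    CoprodI.of (M := Mfam G H) (i := true) s.1.1⁻¹ *
    CoprodI.of (M := Mfam G H) (i := false) s.1.2⁻¹

section PP
variable [DecidableEq G] [DecidableEq H]

theorem injective_lift_agen (hnt : Nontrivial (S G H)) :
    Function.Injective (FreeGroup.lift (agen (G := G) (H := H))) := by
  haveI := hnt
  set X : S G H → Set (Word (Mfam G H)) :=
    fun s => {w | w.toList.take 2 = [⟨true, s.1.1⟩, ⟨false, s.1.2⟩]} with hX
  set Y : S G H → Set (Word (Mfam G H)) :=
    fun s => {w | w.toList.take 2 = [⟨false, s.1.2⟩, ⟨true, s.1.1⟩]} with hY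
  apply FreeGroup.injective_lift_of_ping_pong agen X Y
  · -- nonempty
    intro s
    refine ⟨⟨[⟨true, s.1.1⟩, ⟨false, s.1.2⟩], ?_, ?_⟩, rfl⟩
    · rintro l hl
      simp only [List.mem_cons, List.not_mem_nil, or_false] at hl
      rcases hl with h | h
      · subst h; exact s.2.1
      · subst h; exact s.2.2
    · simp
  · -- X pairwise disjoint
    intro s s' hss
    show Disjoint _ _
    rw [Set.disjoint_left]
    intro w hw hw'
    apply hss
    rw [hX] at hw hw'
    simp only [Set.mem_setOf_eq] at hw hw'
    rw [hw] at hw'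
    simp only [List.cons.injEq, and_true] at hw'
    exact Subtype.ext (Prod.ext (sigma_snd_eq hw'.1) (sigma_snd_eq hw'.2))
  · -- Y pairwise disjoint
    intro s s' hss
    show Disjoint _ _
    rw [Set.disjoint_left]
    intro w hw hw'
    apply hss
    rw [hY] at hw hw'
    simp only [Set.mem_setOf_eq] at hw hw'
    rw [hw] at hw'
    simp only [List.cons.injEq, and_true] at hw'
    exact Subtype.ext (Prod.ext (sigma_snd_eq hw'.2) (sigma_snd_eq hw'.1))
  · -- X and Y disjoint
    intro s s'
    rw [Set.disjoint_left]
    intro w hw hw'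
    rw [hX] at hw
    rw [hY] at hw'
    simp only [Set.mem_setOf_eq] at hw hw'
    rw [hw] at hw'
    simp only [List.cons.injEq] at hw'
    exact Bool.noConfusion (congrArg Sigma.fst hw'.1)
  · -- ping
    rintro s x ⟨w, hw, rfl⟩
    show ((agen s) • w).toList.take 2 = _
    refine smul_toList_C (by simp) s.2.1 s.2.2 w ?_
    intro t ht
    apply hw
    show w.toList.take 2 = _
    rw [ht]
    rfl
  · -- pong
    rintro s x ⟨w, hw, rfl⟩
    show ((agen⁻¹ s) • w).toList.take 2 = _
    have hinv : (agen⁻¹ s : CoprodI (Mfam G H)) =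
        CoprodI.of (M := Mfam G H) (i := false) s.1.2 *
          CoprodI.of (M := Mfam G H) (i := true) s.1.1 *
          CoprodI.of (M := Mfam G H) (i := false) s.1.2⁻¹ *
          CoprodI.of (M := Mfam G H) (i := true) s.1.1⁻¹ := by
      show (agen s)⁻¹ = _
      simp only [agen, map_inv, mul_inv_rev, inv_inv, mul_assoc]
    rw [hinv]
    refine smul_toList_C (by simp) s.2.2 s.2.1 w ?_
    intro t ht
    apply hw
    show w.toList.take 2 = _
    rw [ht]
    rfl
end PP

/-- The commutator `[g, h]` in the free product. -/
def cc (g : G) (h : H) : Coprod G H :=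
  Coprod.inl g * Coprod.inr h * Coprod.inl g⁻¹ * Coprod.inr h⁻¹

/-- The subgroup generated by all commutators `[g,h]`. -/
def P (G H : Type) [Group G] [Group H] : Subgroup (Coprod G H) :=
  Subgroup.closure (Set.range fun p : G × H => cc p.1 p.2)

lemma cc_mem_P (g : G) (h : H) : cc g h ∈ P G H :=
  Subgroup.subset_closure ⟨(g, h), rfl⟩

lemma toProd_cc (g : G) (h : H) : Coprod.toProd (cc g h) = 1 := by
  simp [cc, Prod.ext_iff]

lemma P_le_ker : P G H ≤ (Coprod.toProd : Coprod G H →* G × H).ker := by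
  rw [P, Subgroup.closure_le]
  rintro x ⟨⟨g, h⟩, rfl⟩
  exact toProd_cc g h

lemma cc_one_left (h : H) : cc (1 : G) h = 1 := by simp [cc]
lemma cc_one_right (g : G) : cc g (1 : H) = 1 := by simp [cc]

lemma conj_inl (a g : G) (h : H) :
    Coprod.inl a * cc g h * (Coprod.inl a)⁻¹ = cc (a * g) h * (cc a h)⁻¹ := by
  simp [cc, mul_assoc, mul_inv_rev, map_mul, map_inv, inv_mul_cancel_left, mul_inv_cancel_left]

lemma conj_inr (b : H) (g : G) (h : H) :
    Coprod.inr b * cc g h * (Coprod.inr b)⁻¹ = (cc g b)⁻¹ * cc g (b * h) := by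
  simp [cc, mul_assoc, mul_inv_rev, map_mul, map_inv, inv_mul_cancel_left, mul_inv_cancel_left]

lemma swap_inr_inl (b : H) (g : G) :
    Coprod.inr b * Coprod.inl g = (cc g b)⁻¹ * (Coprod.inl g * Coprod.inr b) := by
  simp [cc, mul_assoc, mul_inv_rev, map_inv, inv_mul_cancel_left]

lemma P_conj_inl (a : G) : ∀ x ∈ P G H, Coprod.inl a * x * (Coprod.inl a)⁻¹ ∈ P G H := by
  intro x hx
  induction hx using Subgroup.closure_induction with
  | mem x hx =>
      obtain ⟨⟨g, h⟩, rfl⟩ := hx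
      rw [conj_inl]
      exact mul_mem (cc_mem_P _ _) (inv_mem (cc_mem_P _ _))
  | one => simpa using one_mem (P G H)
  | mul x y hx hy ihx ihy =>
      have : Coprod.inl a * (x * y) * (Coprod.inl a)⁻¹ =
          (Coprod.inl a * x * (Coprod.inl a)⁻¹) * (Coprod.inl a * y * (Coprod.inl a)⁻¹) := by
        group
      rw [this]; exact mul_mem ihx ihy
  | inv x hx ihx =>
      have : Coprod.inl a * x⁻¹ * (Coprod.inl a)⁻¹ =
          (Coprod.inl a * x * (Coprod.inl a)⁻¹)⁻¹ := by group
      rw [this]; exact inv_mem ihx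

lemma P_conj_inr (b : H) : ∀ x ∈ P G H, Coprod.inr b * x * (Coprod.inr b)⁻¹ ∈ P G H := by
  intro x hx
  induction hx using Subgroup.closure_induction with
  | mem x hx =>
      obtain ⟨⟨g, h⟩, rfl⟩ := hx
      rw [conj_inr]
      exact mul_mem (inv_mem (cc_mem_P _ _)) (cc_mem_P _ _)
  | one => simpa using one_mem (P G H)
  | mul x y hx hy ihx ihy =>
      have : Coprod.inr b * (x * y) * (Coprod.inr b)⁻¹ =
          (Coprod.inr b * x * (Coprod.inr b)⁻¹) * (Coprod.inr b * y * (Coprod.inr b)⁻¹) := by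
        group
      rw [this]; exact mul_mem ihx ihy
  | inv x hx ihx =>
      have : Coprod.inr b * x⁻¹ * (Coprod.inr b)⁻¹ =
          (Coprod.inr b * x * (Coprod.inr b)⁻¹)⁻¹ := by group
      rw [this]; exact inv_mem ihx

lemma P_conj (q : Coprod G H) : ∀ x ∈ P G H, q * x * q⁻¹ ∈ P G H := by
  induction q using Coprod.induction_on' with
  | one => intro x hx; simpa using hx
  | inl_mul m y ih =>
      intro x hx
      have : Coprod.inl m * y * x * (Coprod.inl m * y)⁻¹ =
          Coprod.inl m * (y * x * y⁻¹) * (Coprod.inl m)⁻¹ := by group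
      rw [this]
      exact P_conj_inl m _ (ih x hx)
  | inr_mul n y ih =>
      intro x hx
      have : Coprod.inr n * y * x * (Coprod.inr n * y)⁻¹ =
          Coprod.inr n * (y * x * y⁻¹) * (Coprod.inr n)⁻¹ := by group
      rw [this]
      exact P_conj_inr n _ (ih x hx)

lemma decomp (x : Coprod G H) :
    ∃ p ∈ P G H, x = p * Coprod.inl (Coprod.fst x) * Coprod.inr (Coprod.snd x) := by
  induction x using Coprod.induction_on' with
  | one => exact ⟨1, one_mem _, by simp⟩
  | inl_mul m y ih =>
      obtain ⟨p, hp, hy⟩ := ih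
      refine ⟨Coprod.inl m * p * (Coprod.inl m)⁻¹, P_conj_inl m p hp, ?_⟩
      simp only [map_mul, Coprod.fst_apply_inl, Coprod.snd_apply_inl, one_mul]
      conv_lhs => rw [hy]
      group
  | inr_mul n y ih =>
      obtain ⟨p, hp, hy⟩ := ih
      refine ⟨(Coprod.inr n * p * (Coprod.inr n)⁻¹) * (cc (Coprod.fst y) n)⁻¹,
        mul_mem (P_conj_inr n p hp) (inv_mem (cc_mem_P _ _)), ?_⟩
      simp only [map_mul, Coprod.fst_apply_inr, Coprod.snd_apply_inr, one_mul, map_one]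
      conv_lhs => rw [hy]
      simp only [cc, map_inv, mul_inv_rev, inv_inv]
      group

lemma ker_eq_P : (Coprod.toProd : Coprod G H →* G × H).ker = P G H := by
  refine le_antisymm ?_ P_le_ker
  intro x hx
  obtain ⟨p, hp, hxp⟩ := decomp x
  have h1 : Coprod.fst x = 1 := by
    rw [← Coprod.fst_toProd, MonoidHom.mem_ker.mp hx]; rfl
  have h2 : Coprod.snd x = 1 := by
    rw [← Coprod.snd_toProd, MonoidHom.mem_ker.mp hx]; rfl
  rw [hxp, h1, h2]
  simpa using hp

lemma range_eq_P :
    (FreeGroup.lift fun s : S G H => cc s.1.1 s.1.2).range = P G H := by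
  rw [FreeGroup.range_lift_eq_closure]
  refine le_antisymm (Subgroup.closure_le _ |>.mpr ?_) (Subgroup.closure_le _ |>.mpr ?_)
  · rintro x ⟨s, rfl⟩
    exact cc_mem_P _ _
  · rintro x ⟨⟨g, h⟩, rfl⟩
    by_cases hg : g = 1
    · subst hg; simp only [cc_one_left]; exact one_mem _
    by_cases hh : h = 1
    · subst hh; simp only [cc_one_right]; exact one_mem _
    exact Subgroup.subset_closure ⟨⟨(g, h), hg, hh⟩, rfl⟩


def tC : Coprod G H →* CoprodI (Mfam G H) :=
  Coprod.lift (CoprodI.of (M := Mfam G H) (i := true)) (CoprodI.of (M := Mfam G H) (i := false))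

lemma tC_comp_phi :
    tC.comp (FreeGroup.lift fun s : S G H => cc s.1.1 s.1.2) = FreeGroup.lift agen := by
  apply FreeGroup.ext_hom
  intro s
  simp [tC, cc, agen, map_mul, Coprod.lift_apply_inl, Coprod.lift_apply_inr]

lemma injective_phi [DecidableEq G] [DecidableEq H] (hnt : Nontrivial (S G H)) :
    Function.Injective (FreeGroup.lift fun s : S G H => cc s.1.1 s.1.2) := by
  intro x y hxy
  apply injective_lift_agen hnt
  rw [← tC_comp_phi]
  simp only [MonoidHom.comp_apply, hxy]

lemma freeGroup_noncomm {α : Type*} [DecidableEq α] {x y : α} (h : x ≠ y) :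
    FreeGroup.of x * FreeGroup.of y ≠ FreeGroup.of y * FreeGroup.of x := by
  intro hc
  have hbool : FreeGroup.of true * FreeGroup.of false
      ≠ FreeGroup.of false * FreeGroup.of true := by decide
  apply hbool
  have := congrArg (FreeGroup.lift fun z =>
    if z = x then FreeGroup.of true else if z = y then FreeGroup.of false else 1) hc
  simpa [h, Ne.symm h] using this


end KCP

open KCP in
/-- For finite groups G, H with |G| ≥ 3 and |H| ≥ 2, the kernel of the canonical map
G * H → G × H is a free group of rank at least 2; in particular it is nonabelian. -/
theorem ker_coprod_to_prod_free_of_rank_ge_two (G H : Type) [Group G] [Group H]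
    [Finite G] [Finite H] (hG : 3 ≤ Nat.card G) (hH : 2 ≤ Nat.card H) :
    (∃ ι : Type, Nonempty
        (FreeGroupBasis ι
          ↥(MonoidHom.ker (Monoid.Coprod.lift (MonoidHom.inl G H) (MonoidHom.inr G H)))) ∧
        2 ≤ Cardinal.mk ι) ∧
      ∃ a b : ↥(MonoidHom.ker (Monoid.Coprod.lift (MonoidHom.inl G H) (MonoidHom.inr G H))),
        a * b ≠ b * a := by
  classical
  letI : DecidableEq G := Classical.decEq G
  letI : DecidableEq H := Classical.decEq H
  -- two distinct nontrivial elements of G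
  letI : Fintype G := Fintype.ofFinite G
  have hcard : 1 < (Finset.univ.erase (1 : G)).card := by
    have h1 : Fintype.card G = Nat.card G := (Nat.card_eq_fintype_card).symm
    have h2 := Finset.card_erase_of_mem (Finset.mem_univ (1 : G))
    have h3 : (Finset.univ : Finset G).card = Fintype.card G := Finset.card_univ
    omega
  obtain ⟨g1, hg1m, g2, hg2m, hgne⟩ := Finset.one_lt_card.mp hcard
  have hg1 : g1 ≠ 1 := (Finset.mem_erase.mp hg1m).1
  have hg2 : g2 ≠ 1 := (Finset.mem_erase.mp hg2m).1
  haveI : Nontrivial H := Finite.one_lt_card_iff_nontrivial.mp (by omega)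
  obtain ⟨h0, hh0⟩ := exists_ne (1 : H)
  set s1 : S G H := ⟨(g1, h0), hg1, hh0⟩ with hs1
  set s2 : S G H := ⟨(g2, h0), hg2, hh0⟩ with hs2
  have hs12 : s1 ≠ s2 := by
    intro he
    exact hgne (congrArg (fun s : S G H => s.1.1) he)
  have hnt : Nontrivial (S G H) := ⟨⟨s1, s2, hs12⟩⟩
  have hinj := injective_phi (G := G) (H := H) hnt
  have hrange : (FreeGroup.lift fun s : S G H => cc s.1.1 s.1.2).range
      = (Monoid.Coprod.lift (MonoidHom.inl G H) (MonoidHom.inr G H)).ker :=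
    range_eq_P.trans ker_eq_P.symm
  let repr : ↥(MonoidHom.ker (Monoid.Coprod.lift (MonoidHom.inl G H) (MonoidHom.inr G H)))
      ≃* FreeGroup (S G H) :=
    ((MonoidHom.ofInjective hinj).trans (MulEquiv.subgroupCongr hrange)).symm
  refine ⟨⟨S G H, ⟨FreeGroupBasis.ofRepr repr⟩, Cardinal.two_le_iff.mpr ⟨s1, s2, hs12⟩⟩, ?_⟩
  refine ⟨repr.symm (FreeGroup.of s1), repr.symm (FreeGroup.of s2), ?_⟩
  intro hcomm
  apply freeGroup_noncomm hs12
  have := congrArg repr hcomm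
  simpa [map_mul] using this
end

section
/- Let Γ be a finite simplicial graph with vertex groups, and Δ a full (induced) subgraph of Γ. Then the subgroup of the graph product G_Γ generated by the images of the vertex groups G_v for v ∈ Δ is canonically isomorphic to the graph product G_Δ. -/
/-! The graph product over `Γ` has the universal property of the free product of the
vertex groups subject to commutation of adjacent vertex groups. Sending the vertex groups
outside `S` to `1` therefore defines a retraction of `G_Γ` onto `G_S`, which is a left inverse
of the canonical map `G_S → G_Γ`; the image of that map is generated by the vertex groups
of `S` because `G_S` is generated by its vertex groups. -/

open scoped commutatorElement

variable {V : Type} (Γ : SimpleGraph V) (G : V → Type) [∀ v, Group (G v)]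

/-- The normal subgroup of commutation relations defining the graph product. -/
def graphProductRels : Subgroup (Monoid.CoprodI G) :=
  Subgroup.normalClosure
    {x | ∃ (u w : V) (_ : Γ.Adj u w) (a : G u) (b : G w),
      x = ⁅Monoid.CoprodI.of a, Monoid.CoprodI.of b⁆}

instance : (graphProductRels Γ G).Normal :=
  Subgroup.normalClosure_normal

/-- The graph product of the groups `G v` over the graph `Γ`. -/
def GraphProduct : Type :=
  Monoid.CoprodI G ⧸ graphProductRels Γ G

instance : Group (GraphProduct Γ G) :=
  inferInstanceAs (Group (Monoid.CoprodI G ⧸ graphProductRels Γ G))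

/-- The canonical map of a vertex group into the graph product. -/
def gpOf (v : V) : G v →* GraphProduct Γ G :=
  (QuotientGroup.mk' (graphProductRels Γ G)).comp Monoid.CoprodI.of

lemma gpOf_commute {u w : V} (h : Γ.Adj u w) (a : G u) (b : G w) :
    Commute (gpOf Γ G u a) (gpOf Γ G w b) := by
  rw [Commute, SemiconjBy, ← commutatorElement_eq_one_iff_mul_comm]
  show (QuotientGroup.mk' (graphProductRels Γ G)) ⁅Monoid.CoprodI.of a, Monoid.CoprodI.of b⁆ = 1
  rw [QuotientGroup.mk'_apply, QuotientGroup.eq_one_iff]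
  exact Subgroup.subset_normalClosure ⟨u, w, h, a, b, rfl⟩

/-- The graph product over the full subgraph induced on a subset `S` of vertices. -/
def GPsub (S : Set V) : Type :=
  GraphProduct (SimpleGraph.comap ((↑) : S → V) Γ) (fun s => G s.1)

instance (S : Set V) : Group (GPsub Γ G S) :=
  inferInstanceAs (Group (GraphProduct _ _))

/-- The canonical homomorphism from the graph product over an induced subgraph into the
graph product over the whole graph. -/
def ofSub (S : Set V) : GPsub Γ G S →* GraphProduct Γ G :=
  QuotientGroup.lift _ (Monoid.CoprodI.lift (fun s : S => gpOf Γ G s.1))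
    (Subgroup.normalClosure_le_normal (by
      rintro x ⟨u, w, hadj, a, b, rfl⟩
      rw [SetLike.mem_coe, MonoidHom.mem_ker, map_commutatorElement]
      simp only [Monoid.CoprodI.lift_of]
      exact commutatorElement_eq_one_iff_commute.2 (gpOf_commute Γ G hadj a b)))

/-- The canonical homomorphism between graph products over nested induced subgraphs. -/
def mapIncl {S T : Set V} (h : S ⊆ T) : GPsub Γ G S →* GPsub Γ G T :=
  QuotientGroup.lift _
    (Monoid.CoprodI.lift (fun s : S =>
      gpOf (SimpleGraph.comap ((↑) : T → V) Γ) (fun t => G t.1) (Set.inclusion h s)))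
    (Subgroup.normalClosure_le_normal (by
      rintro x ⟨u, w, hadj, a, b, rfl⟩
      rw [SetLike.mem_coe, MonoidHom.mem_ker, map_commutatorElement]
      simp only [Monoid.CoprodI.lift_of]
      exact commutatorElement_eq_one_iff_commute.2
        (gpOf_commute (SimpleGraph.comap ((↑) : T → V) Γ) (fun t => G t.1)
          (u := Set.inclusion h u) (w := Set.inclusion h w) hadj a b)))

namespace GraphProduct

variable {Γ G} {H : Type*} [Group H]

def lift (f : ∀ v, G v →* H) (hf : ∀ u w, Γ.Adj u w → ∀ a b, Commute (f u a) (f w b)) :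
    GraphProduct Γ G →* H :=
  QuotientGroup.lift _ (Monoid.CoprodI.lift f)
    (Subgroup.normalClosure_le_normal (by
      rintro x ⟨u, w, hadj, a, b, rfl⟩
      rw [SetLike.mem_coe, MonoidHom.mem_ker, map_commutatorElement,
        Monoid.CoprodI.lift_of, Monoid.CoprodI.lift_of]
      exact commutatorElement_eq_one_iff_commute.2 (hf u w hadj a b)))

variable (Γ G) in
def mk : Monoid.CoprodI G →* GraphProduct Γ G :=
  QuotientGroup.mk' _

lemma mk_surjective : Function.Surjective (mk Γ G) :=
  QuotientGroup.mk'_surjective _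

variable (f : ∀ v, G v →* H) (hf : ∀ u w, Γ.Adj u w → ∀ a b, Commute (f u a) (f w b))

@[simp]
lemma lift_gpOf (v : V) (a : G v) : lift f hf (gpOf Γ G v a) = f v a :=
  Monoid.CoprodI.lift_of f a

lemma lift_comp_mk : (lift f hf).comp (mk Γ G) = Monoid.CoprodI.lift f :=
  rfl

lemma range_lift : (lift f hf).range = ⨆ v, (f v).range := by
  rw [MonoidHom.range_eq_map, ← MonoidHom.range_eq_top.2 mk_surjective, ← MonoidHom.range_comp,
    lift_comp_mk, Monoid.CoprodI.range_eq_iSup]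

@[ext]
lemma hom_ext {φ ψ : GraphProduct Γ G →* H}
    (h : ∀ v, φ.comp (gpOf Γ G v) = ψ.comp (gpOf Γ G v)) : φ = ψ :=
  QuotientGroup.monoidHom_ext _ (Monoid.CoprodI.ext_hom _ _ h)

end GraphProduct

section Restriction

variable {S : Set V}

open Classical in
variable (S) in
noncomputable def restrictVertex (v : V) : G v →* GraphProduct (Γ.comap ((↑) : S → V)) (G ·) :=
  if h : v ∈ S then gpOf (Γ.comap ((↑) : S → V)) (G ·) (⟨v, h⟩ : S) else 1

lemma restrictVertex_of_mem {v : V} (h : v ∈ S) :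
    restrictVertex Γ G S v = gpOf (Γ.comap ((↑) : S → V)) (G ·) (⟨v, h⟩ : S) :=
  dif_pos h

lemma restrictVertex_of_notMem {v : V} (h : v ∉ S) : restrictVertex Γ G S v = 1 :=
  dif_neg h

lemma restrictVertex_commute {u w : V} (hadj : Γ.Adj u w) (a : G u) (b : G w) :
    Commute (restrictVertex Γ G S u a) (restrictVertex Γ G S w b) := by
  by_cases hu : u ∈ S
  · by_cases hw : w ∈ S
    · rw [restrictVertex_of_mem Γ G hu, restrictVertex_of_mem Γ G hw]
      exact gpOf_commute (Γ.comap ((↑) : S → V)) (G ·) (u := ⟨u, hu⟩) (w := ⟨w, hw⟩) hadj a b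
    · rw [restrictVertex_of_notMem Γ G hw]
      exact Commute.one_right _
  · rw [restrictVertex_of_notMem Γ G hu]
    exact Commute.one_left _

variable (S) in
noncomputable def restrictGP : GraphProduct Γ G →* GraphProduct (Γ.comap ((↑) : S → V)) (G ·) :=
  GraphProduct.lift (restrictVertex Γ G S) fun _ _ hadj => restrictVertex_commute Γ G hadj

lemma restrictGP_gpOf_of_mem {v : V} (h : v ∈ S) (a : G v) :
    restrictGP Γ G S (gpOf Γ G v a) = gpOf (Γ.comap ((↑) : S → V)) (G ·) (⟨v, h⟩ : S) a := by
  rw [restrictGP, GraphProduct.lift_gpOf, restrictVertex_of_mem Γ G h]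

variable (S)

lemma restrictGP_leftInverse_ofSub : Function.LeftInverse (restrictGP Γ G S) (ofSub Γ G S) := by
  suffices (restrictGP Γ G S).comp (ofSub Γ G S) = MonoidHom.id _ from DFunLike.congr_fun this
  exact GraphProduct.hom_ext fun s => MonoidHom.ext fun a => restrictGP_gpOf_of_mem Γ G s.2 a

lemma range_ofSub :
    (ofSub Γ G S).range = Subgroup.closure (⋃ v ∈ S, Set.range (gpOf Γ G v)) :=
  calc (ofSub Γ G S).range = ⨆ s : S, (gpOf Γ G s).range :=
      GraphProduct.range_lift (Γ := Γ.comap ((↑) : S → V)) _ fun _ _ hadj => gpOf_commute Γ G hadj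
    _ = _ := by
      rw [Subgroup.iSup_eq_closure, Set.biUnion_eq_iUnion]
      simp only [MonoidHom.coe_range]

end Restriction

/-- The canonical map from the graph product over a full (induced) subgraph to the graph
product over the whole graph is injective, with image the subgroup generated by the
images of the vertex groups of the subgraph: the special subgroup is canonically
isomorphic to the graph product over the induced subgraph. -/
theorem special_subgroup_isomorphic (S : Set V) :
    Function.Injective (ofSub Γ G S) ∧
    (∀ (s : S) (a : G s.1), ofSub Γ G S (gpOf _ _ s a) = gpOf Γ G s.1 a) ∧
    (ofSub Γ G S).range = Subgroup.closure (⋃ v ∈ S, Set.range (gpOf Γ G v)) :=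
  ⟨(restrictGP_leftInverse_ofSub Γ G S).injective, fun _ _ => rfl, range_ofSub Γ G S⟩
end
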